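/- arXiv:0809.1700 — 5 statements merged into one kernel-verified Lean document; each statement's English description precedes it below -/
import Mathlib

section
/- For the sequences defined by p_0 = 0, q_0 = 1, p_{n+1} = (κ+1)p_n + κ q_n, q_{n+1} = p_n + q_n, for all m ≥ 1 and n ≥ m−1: −(q_1 + ⋯ + q_{m−1})·p_n + q_m·q_n = q_{n−(m−1)}. -/
/-!
Unrolling the recursion gives `p k = κ (q 1 + ⋯ + q k)`. With `S k = q 1 + ⋯ + q k`, the quantity
`F k n = -S k * p n + q (k + 1) * q n` is invariant under `(k, n) ↦ (k + 1, n + 1)`: substituting the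
recursions for `p (n + 1)`, `q (n + 1)` and `q (k + 2) = κ S (k + 1) + q (k + 1)`, everything except
`F k n` cancels. Since `F 0 n = q 1 * q n = q n`, we get `F k n = q (n - k)`.
-/

open Finset

namespace KappaRecurrence

variable {R : Type*} [CommRing R] {c : R} {p q : ℕ → R}

theorem p_eq_mul_sum (hp0 : p 0 = 0) (hp : ∀ n, p (n + 1) = (c + 1) * p n + c * q n)
    (hq : ∀ n, q (n + 1) = p n + q n) (k : ℕ) :
    p k = c * ∑ i ∈ Icc 1 k, q i := by
  induction k with
  | zero => simp [hp0]
  | succ k ih =>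
    rw [sum_Icc_succ_top (by omega), hp, hq, mul_add, ← ih]
    ring

theorem neg_sum_mul_add_mul_succ_succ (hp0 : p 0 = 0)
    (hp : ∀ n, p (n + 1) = (c + 1) * p n + c * q n) (hq : ∀ n, q (n + 1) = p n + q n)
    (k n : ℕ) :
    -(∑ i ∈ Icc 1 (k + 1), q i) * p (n + 1) + q (k + 2) * q (n + 1) =
      -(∑ i ∈ Icc 1 k, q i) * p n + q (k + 1) * q n := by
  have hqk : q (k + 2) = c * ∑ i ∈ Icc 1 (k + 1), q i + q (k + 1) := by
    rw [hq, p_eq_mul_sum hp0 hp hq]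
  rw [hqk, hp n, hq n, sum_Icc_succ_top (by omega)]
  ring

theorem neg_sum_mul_add_mul_add (hp0 : p 0 = 0) (hq0 : q 0 = 1)
    (hp : ∀ n, p (n + 1) = (c + 1) * p n + c * q n) (hq : ∀ n, q (n + 1) = p n + q n)
    (k j : ℕ) :
    -(∑ i ∈ Icc 1 k, q i) * p (k + j) + q (k + 1) * q (k + j) = q j := by
  induction k with
  | zero => simp [hq, hp0, hq0]
  | succ k ih =>
    rw [Nat.add_right_comm, neg_sum_mul_add_mul_succ_succ hp0 hp hq, ih]

end KappaRecurrence

theorem stmt3_general (κ : ℕ) (p q : ℕ → ℤ) (hp0 : p 0 = 0) (hq0 : q 0 = 1)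
    (hp : ∀ n, p (n + 1) = (κ + 1) * p n + κ * q n)
    (hq : ∀ n, q (n + 1) = p n + q n) :
    ∀ m : ℕ, 1 ≤ m → ∀ n : ℕ, m - 1 ≤ n →
      -(∑ i ∈ Finset.Icc 1 (m - 1), q i) * p n + q m * q n = q (n - (m - 1)) := by
  intro m hm n hn
  obtain ⟨k, rfl⟩ : ∃ k, m = k + 1 := ⟨m - 1, by omega⟩
  obtain ⟨j, rfl⟩ : ∃ j, n = k + j := ⟨n - k, by omega⟩
  simpa using KappaRecurrence.neg_sum_mul_add_mul_add hp0 hq0 hp hq k j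

theorem stmt3 (κ : ℕ) (hκ : 1 ≤ κ) (p q : ℕ → ℤ) (hp0 : p 0 = 0) (hq0 : q 0 = 1)
    (hp : ∀ n, p (n + 1) = (κ + 1) * p n + κ * q n)
    (hq : ∀ n, q (n + 1) = p n + q n) :
    ∀ m : ℕ, 1 ≤ m → ∀ n : ℕ, m - 1 ≤ n →
      -(∑ i ∈ Finset.Icc 1 (m - 1), q i) * p n + q m * q n = q (n - (m - 1)) :=
  stmt3_general κ p q hp0 hq0 hp hq
end

section
/- For the sequences defined by p_0 = 0, q_0 = 1, p_{n+1} = (κ+1)p_n + κ q_n, q_{n+1} = p_n + q_n, we have q_m · q_n ≡ q_{n−m+1} (mod p_n) for all m ≥ 1 and n ≥ m−1. -/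
/-!
Let `M = [[κ+1, κ], [1, 1]]`, so that `(p m, q m) = M ^ m (0, 1)`. The vectors
`w k = (-p k, q (k + 1))` satisfy `M (w (k + 1)) = w k`, and `q n • (0, 1) ≡ w n` modulo `p n`.
Applying `M ^ m` to this congruence gives `q n • (p m, q m) ≡ w (n - m)`, whose second coordinate
is the claim for `m ≤ n`; the remaining case `n = m - 1` reduces to `q n ^ 2 ≡ q 1 = 1`.
-/

theorem q_mul_modEq_of_add_eq {κ : ℤ} {p q : ℕ → ℤ} (hp0 : p 0 = 0) (hq0 : q 0 = 1)
    (hp : ∀ n, p (n + 1) = (κ + 1) * p n + κ * q n)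
    (hq : ∀ n, q (n + 1) = p n + q n) {m k n : ℕ} (hmk : m + k = n) :
    q n * p m ≡ -p k [ZMOD p n] ∧ q n * q m ≡ q (k + 1) [ZMOD p n] := by
  induction m generalizing k with
  | zero =>
    subst hmk
    rw [zero_add, hp0, hq0, hq k]
    exact ⟨by simp [Int.modEq_iff_dvd], by simp [Int.modEq_iff_dvd]⟩
  | succ m ih =>
    obtain ⟨hpm, hqm⟩ := ih (k := k + 1) (by omega)
    constructor
    · convert (hpm.mul_left (κ + 1)).add (hqm.mul_left κ) using 1
      · rw [hp m]; ring
      · linear_combination hp k - κ * hq (k + 1) - κ * hq k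
    · convert hpm.add hqm using 1
      · rw [hq m]; ring
      · linear_combination -hq (k + 1)

theorem q_mul_q_modEq_of_le {κ : ℤ} {p q : ℕ → ℤ} (hp0 : p 0 = 0) (hq0 : q 0 = 1)
    (hp : ∀ n, p (n + 1) = (κ + 1) * p n + κ * q n)
    (hq : ∀ n, q (n + 1) = p n + q n) {m n : ℕ} (hmn : m ≤ n) :
    q m * q n ≡ q (n - m + 1) [ZMOD p n] := by
  rw [mul_comm]
  exact (q_mul_modEq_of_add_eq hp0 hq0 hp hq (k := n - m) (by omega)).2

theorem q_succ_mul_q_modEq_one {κ : ℤ} {p q : ℕ → ℤ} (hp0 : p 0 = 0) (hq0 : q 0 = 1)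
    (hp : ∀ n, p (n + 1) = (κ + 1) * p n + κ * q n)
    (hq : ∀ n, q (n + 1) = p n + q n) (n : ℕ) :
    q (n + 1) * q n ≡ 1 [ZMOD p n] := by
  have hsq : q n * q n ≡ q 1 [ZMOD p n] := by
    simpa using q_mul_q_modEq_of_le hp0 hq0 hp hq le_rfl
  have hq1 : q 1 = 1 := by rw [hq 0, hp0, hq0, zero_add]
  calc q (n + 1) * q n = p n * q n + q n * q n := by rw [hq n]; ring
    _ ≡ 0 + q 1 [ZMOD p n] := (Int.modEq_zero_iff_dvd.2 (dvd_mul_right _ _)).add hsq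
    _ = 1 := by rw [hq1, zero_add]

theorem stmt4_general (κ : ℕ) (p q : ℕ → ℤ) (hp0 : p 0 = 0) (hq0 : q 0 = 1)
    (hp : ∀ n, p (n + 1) = (κ + 1) * p n + κ * q n)
    (hq : ∀ n, q (n + 1) = p n + q n) :
    ∀ m : ℕ, 1 ≤ m → ∀ n : ℕ, m - 1 ≤ n →
      q m * q n ≡ q (n - m + 1) [ZMOD p n] := by
  intro m _ n hn
  rcases le_or_gt m n with hmn | hnm
  · exact q_mul_q_modEq_of_le hp0 hq0 hp hq hmn
  · obtain rfl : m = n + 1 := by omega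
    rw [Nat.sub_eq_zero_of_le (Nat.le_succ n), zero_add, hq 0, hp0, hq0, zero_add]
    exact q_succ_mul_q_modEq_one hp0 hq0 hp hq n

theorem stmt4 (κ : ℕ) (hκ : 1 ≤ κ) (p q : ℕ → ℤ) (hp0 : p 0 = 0) (hq0 : q 0 = 1)
    (hp : ∀ n, p (n + 1) = (κ + 1) * p n + κ * q n)
    (hq : ∀ n, q (n + 1) = p n + q n) :
    ∀ m : ℕ, 1 ≤ m → ∀ n : ℕ, m - 1 ≤ n →
      q m * q n ≡ q (n - m + 1) [ZMOD p n] :=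
  stmt4_general κ p q hp0 hq0 hp hq
end

section
/- For the sequences defined by p_0 = 0, q_0 = 1, p_{n+1} = 3p_n + 2q_n, q_{n+1} = p_n + q_n, the Euler characteristic formula holds: 2 − p_n/2 + Σ_{k=1}^{n−1} (q_{n−k+1} − 1) = 2 − n for every n ≥ 1. -/
/-! Eliminating `q n` from the recurrence gives `p (n + 1) = p n + 2 * q (n + 1)`, so
`p n / 2 = q 1 + q 2 + ⋯ + q n` with `q 1 = 1`. The sum in the statement is `∑ (q j - 1)`
over `2 ≤ j ≤ n` read backwards, so everything but `2 - q 1 - (n - 1) = 2 - n` cancels. -/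

open Finset

theorem sum_Icc_one_sub_add_one_eq_sum_Icc_two {M : Type*} [AddCommMonoid M] (f : ℕ → M)
    (n : ℕ) : ∑ k ∈ Icc 1 (n - 1), f (n - k + 1) = ∑ j ∈ Icc 2 n, f j := by
  refine sum_nbij' (fun k ↦ n - k + 1) (fun j ↦ n - j + 1) ?_ ?_ ?_ ?_ fun _ _ ↦ rfl <;>
    intro k hk <;> simp only [mem_Icc] at hk ⊢ <;> omega

section Recurrence

variable {p q : ℕ → ℤ} (hp : ∀ n, p (n + 1) = 3 * p n + 2 * q n)
  (hq : ∀ n, q (n + 1) = p n + q n)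
include hp hq

theorem p_succ_eq_add_two_mul_q_succ (n : ℕ) : p (n + 1) = p n + 2 * q (n + 1) := by
  rw [hp, hq]; ring

theorem p_eq_add_two_mul_sum_q (n : ℕ) : p n = p 0 + 2 * ∑ j ∈ Icc 1 n, q j := by
  induction n with
  | zero => simp
  | succ n ih => rw [sum_Icc_succ_top (by omega), p_succ_eq_add_two_mul_q_succ hp hq, ih]; ring

end Recurrence

theorem stmt9 (p q : ℕ → ℤ) (hp0 : p 0 = 0) (hq0 : q 0 = 1)
    (hp : ∀ n, p (n + 1) = 3 * p n + 2 * q n)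
    (hq : ∀ n, q (n + 1) = p n + q n) :
    ∀ n : ℕ, 1 ≤ n →
      2 - p n / 2 + (∑ k ∈ Finset.Icc 1 (n - 1), (q (n - k + 1) - 1)) = 2 - (n : ℤ) := by
  intro n hn
  have hq1 : q 1 = 1 := by rw [hq, hp0, hq0]; rfl
  have half_p : p n / 2 = q 1 + ∑ j ∈ Icc 2 n, q j := by
    rw [p_eq_add_two_mul_sum_q hp hq, hp0, zero_add, Int.mul_ediv_cancel_left _ two_ne_zero,
      ← add_sum_Ioc_eq_sum_Icc hn, ← Icc_add_one_left_eq_Ioc]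
    rfl
  have card : ((#(Icc 2 n) : ℕ) : ℤ) = n - 1 := by rw [Nat.card_Icc]; omega
  rw [sum_Icc_one_sub_add_one_eq_sum_Icc_two (fun j ↦ q j - 1), half_p, sum_sub_distrib,
    sum_const, nsmul_one, card, hq1]
  ring
end

section
/- For the sequences defined by p_0 = 0, q_0 = 1, p_{n+1} = 3p_n + 2q_n, q_{n+1} = p_n + q_n, and for integers n ≥ 3, 2 ≤ k ≤ n−1, 1 ≤ i ≤ (q_{n−k+1} − 1)/2: the index 2(q_n + q_{n−1} + ⋯ + q_{n−k+2}) + 2i − 1 lies strictly between 2q_n and p_n (so the leading disk patch of the first pair of the i-th compressing disk of the k-th step lies in the last region). -/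
/-!
The recurrence gives `p (j + 1) = p j + 2 * q (j + 1)`, so `p n` telescopes to
`p m + 2 * (q (m + 1) + ⋯ + q n)` with `m = n - k + 1`. The index in question is
`2 * (q (m + 1) + ⋯ + q n) + 2 * i - 1`: it exceeds `2 * q n` because the sum contains `q n` and
`i ≥ 1`, and it falls short of `p n` because `2 * i - 1 < q m - 1 ≤ p m`.
-/

namespace PQRecurrence

theorem p_succ_eq_add_two_mul_q_succ {p q : ℕ → ℤ}
    (hp : ∀ n, p (n + 1) = 3 * p n + 2 * q n) (hq : ∀ n, q (n + 1) = p n + q n) (n : ℕ) :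
    p (n + 1) = p n + 2 * q (n + 1) := by
  rw [hp, hq]; ring

theorem p_eq_add_two_mul_sum_Ioc {p q : ℕ → ℤ}
    (hp : ∀ n, p (n + 1) = 3 * p n + 2 * q n) (hq : ∀ n, q (n + 1) = p n + q n)
    {m n : ℕ} (hmn : m ≤ n) :
    p n = p m + 2 * ∑ j ∈ Finset.Ioc m n, q j := by
  induction n, hmn using Nat.le_induction with
  | base => simp
  | succ n hmn ih =>
    rw [Finset.sum_Ioc_succ_top (by omega), p_succ_eq_add_two_mul_q_succ hp hq, ih]
    ring

theorem nonneg_p_and_one_le_q {p q : ℕ → ℤ}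
    (hp : ∀ n, p (n + 1) = 3 * p n + 2 * q n) (hq : ∀ n, q (n + 1) = p n + q n)
    (hp0 : 0 ≤ p 0) (hq0 : 1 ≤ q 0) (n : ℕ) :
    0 ≤ p n ∧ 1 ≤ q n := by
  induction n with
  | zero => exact ⟨hp0, hq0⟩
  | succ n ih => rw [hp, hq]; constructor <;> linarith [ih.1, ih.2]

theorem q_le_p_add_one {p q : ℕ → ℤ}
    (hp : ∀ n, p (n + 1) = 3 * p n + 2 * q n) (hq : ∀ n, q (n + 1) = p n + q n)
    (hp0 : 0 ≤ p 0) (hq0 : 1 ≤ q 0) (hqp0 : q 0 ≤ p 0 + 1) (n : ℕ) :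
    q n ≤ p n + 1 := by
  cases n with
  | zero => exact hqp0
  | succ n =>
    have := nonneg_p_and_one_le_q hp hq hp0 hq0
    rw [p_succ_eq_add_two_mul_q_succ hp hq]
    linarith [(this n).1, (this (n + 1)).2]

end PQRecurrence

open PQRecurrence in
theorem stmt15 (p q : ℕ → ℤ) (hp0 : p 0 = 0) (hq0 : q 0 = 1)
    (hp : ∀ n, p (n + 1) = 3 * p n + 2 * q n)
    (hq : ∀ n, q (n + 1) = p n + q n) :
    ∀ n : ℕ, 3 ≤ n → ∀ k : ℕ, 2 ≤ k → k ≤ n - 1 → ∀ i : ℤ, 1 ≤ i →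
      i ≤ (q (n - k + 1) - 1) / 2 →
      2 * q n < 2 * (∑ j ∈ Finset.Icc (n - k + 2) n, q j) + 2 * i - 1 ∧
      2 * (∑ j ∈ Finset.Icc (n - k + 2) n, q j) + 2 * i - 1 < p n := by
  intro n _ k hk2 hkn i hi1 hi2
  have hIcc : Finset.Icc (n - k + 2) n = Finset.Ioc (n - k + 1) n := Finset.Icc_add_one_left_eq_Ioc _ _
  have hpn := p_eq_add_two_mul_sum_Ioc hp hq (show n - k + 1 ≤ n by omega)
  have hqn : q n ≤ ∑ j ∈ Finset.Ioc (n - k + 1) n, q j :=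
    Finset.single_le_sum
      (fun j _ ↦ by linarith [(nonneg_p_and_one_le_q hp hq hp0.ge (by omega) j).2])
      (Finset.mem_Ioc.mpr ⟨by omega, le_rfl⟩)
  have hqm := q_le_p_add_one hp hq hp0.ge (by omega) (by omega) (n - k + 1)
  rw [hIcc]
  constructor <;> omega
end

section
/- For the sequences defined by p_0 = 0, q_0 = 1, p_{n+1} = 3p_n + 2q_n, q_{n+1} = p_n + q_n, and for any odd k with 1 ≤ k ≤ n−1, the following congruence modulo p_n holds: 2(q_n + q_{n−1} + ⋯ + q_{k+2}) + (Σ_{r=1}^{k} q_r) − 1 + q_n·q_{n−k} − Σ_{j=1}^{n−k−1} q_n·q_j − q_n + 1 ≡ q_1 + q_2 + ⋯ + q_{n−1} (mod p_n). -/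
/-!
The recurrence gives `q (m + 2) = 4 q (m + 1) - q m` and `q (n + 1) = q n + p n`. Hence, for fixed `n`,
both `m ↦ q n * q m` and `m ↦ q (n + 1 - m)` satisfy the same (palindromic) recurrence and agree
modulo `p n` at `m = 0` and `m = 1`, so `q n * q m ≡ q (n - m + 1) [ZMOD p n]` for `m ≤ n`.
Substituting this into the product terms, the left-hand side becomes `∑_{i=1}^{n} q i - q n`.
-/

open Finset

theorem Finset.sum_Icc_one_split {M : Type*} [AddCommMonoid M] (f : ℕ → M) {k n : ℕ}
    (hkn : k < n) :
    ∑ i ∈ Icc 1 n, f i = ∑ i ∈ Icc 1 k, f i + f (k + 1) + ∑ i ∈ Icc (k + 2) n, f i := by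
  have h := sum_Ioc_consecutive f (Nat.zero_le (k + 1)) hkn
  simp only [← Icc_add_one_left_eq_Ioc, zero_add] at h
  rw [← h, sum_Icc_succ_top (by omega)]
  rfl

theorem Finset.sum_Icc_reflect_succ {M : Type*} [AddCommMonoid M] (f : ℕ → M) (k n : ℕ) :
    ∑ j ∈ Icc 1 (n - k - 1), f (n - j + 1) = ∑ i ∈ Icc (k + 2) n, f i := by
  refine sum_nbij' (fun j ↦ n - j + 1) (fun i ↦ n - i + 1) ?_ ?_ ?_ ?_ fun _ _ ↦ rfl <;>
    intro x hx <;> simp only [mem_Icc] at hx ⊢ <;> omega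

section

variable {p q : ℕ → ℤ}

theorem q_add_two (hp : ∀ n, p (n + 1) = 3 * p n + 2 * q n) (hq : ∀ n, q (n + 1) = p n + q n)
    (m : ℕ) : q (m + 2) = 4 * q (m + 1) - q m := by
  rw [hq (m + 1), hp m, hq m]; ring

theorem q_succ_modEq (hq : ∀ n, q (n + 1) = p n + q n) (n : ℕ) : q (n + 1) ≡ q n [ZMOD p n] :=
  Int.modEq_iff_dvd.mpr ⟨-1, by rw [hq n]; ring⟩

theorem q_mul_modEq (hp0 : p 0 = 0) (hq0 : q 0 = 1)
    (hp : ∀ n, p (n + 1) = 3 * p n + 2 * q n) (hq : ∀ n, q (n + 1) = p n + q n) {n : ℕ} :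
    ∀ m a : ℕ, a + m = n → q n * q m ≡ q (a + 1) [ZMOD p n]
  | 0, a, h => by subst h; rw [hq0, mul_one]; exact (q_succ_modEq hq a).symm
  | 1, a, h => by subst h; rw [hq 0, hp0, hq0, zero_add, mul_one]
  | m + 2, a, h => by
    have h₁ := q_mul_modEq hp0 hq0 hp hq (n := n) (m + 1) (a + 1) (by omega)
    have h₀ := q_mul_modEq hp0 hq0 hp hq (n := n) m (a + 2) (by omega)
    calc q n * q (m + 2) = 4 * (q n * q (m + 1)) - q n * q m := by rw [q_add_two hp hq]; ring
      _ ≡ 4 * q (a + 2) - q (a + 3) [ZMOD p n] := by gcongr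
      _ = q (a + 1) := by rw [q_add_two hp hq (a + 1)]; ring

end

theorem stmt19 (p q : ℕ → ℤ) (hp0 : p 0 = 0) (hq0 : q 0 = 1)
    (hp : ∀ n, p (n + 1) = 3 * p n + 2 * q n)
    (hq : ∀ n, q (n + 1) = p n + q n) :
    ∀ n : ℕ, ∀ k : ℕ, Odd k → 1 ≤ k → k ≤ n - 1 →
      2 * (∑ j ∈ Finset.Icc (k + 2) n, q j) + (∑ r ∈ Finset.Icc 1 k, q r) - 1 +
          q n * q (n - k) - (∑ j ∈ Finset.Icc 1 (n - k - 1), q n * q j) - q n + 1 ≡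
        (∑ i ∈ Finset.Icc 1 (n - 1), q i) [ZMOD p n] := by
  intro n k _ hk hkn
  have hprod : q n * q (n - k) ≡ q (k + 1) [ZMOD p n] :=
    q_mul_modEq hp0 hq0 hp hq (n - k) k (by omega)
  have hsum : ∑ j ∈ Icc 1 (n - k - 1), q n * q j ≡ ∑ i ∈ Icc (k + 2) n, q i [ZMOD p n] := by
    rw [← sum_Icc_reflect_succ q k n]
    exact Int.ModEq.sum fun j hj ↦
      q_mul_modEq hp0 hq0 hp hq j (n - j) (by simp only [mem_Icc] at hj; omega)
  have hlast : ∑ i ∈ Icc 1 n, q i = ∑ i ∈ Icc 1 (n - 1), q i + q n := by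
    have h := sum_Icc_succ_top (show 1 ≤ n - 1 + 1 by omega) q
    rwa [Nat.sub_add_cancel (show 1 ≤ n by omega)] at h
  have hsplit := sum_Icc_one_split q (show k < n by omega)
  calc _ ≡ 2 * (∑ j ∈ Icc (k + 2) n, q j) + (∑ r ∈ Icc 1 k, q r) - 1 + q (k + 1)
        - (∑ i ∈ Icc (k + 2) n, q i) - q n + 1 [ZMOD p n] := by gcongr
    _ = _ := by linarith
end
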